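/- The width-4 sector S with representative |0 1 1 ... 1 2 2 ... 2 3⟩ (one 0, M-1 ones, M-1 twos, one 3, N = 2M) satisfies |S| = C(2M, M) - 1; exactly one configuration of the corresponding unconstrained width-2-like problem, namely |1 1 ... 1 3 0 2 2 ... 2⟩, is excluded. -/

import Mathlib

/-- A single flip: the values at two adjacent sites, which differ by exactly 1,
are swapped; all other sites are unchanged. -/
def FlipStep {N k : ℕ} (c c' : Fin N → Fin k) : Prop :=
  ∃ j j' : Fin N, j.val + 1 = j'.val ∧
    ((c j').val = (c j).val + 1 ∨ (c j).val = (c j').val + 1) ∧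
    c' j = c j' ∧ c' j' = c j ∧ ∀ i : Fin N, i ≠ j → i ≠ j' → c' i = c i

/-- Two configurations are in the same sector iff they are related by finitely many flips. -/
def SameSector {N k : ℕ} (c c' : Fin N → Fin k) : Prop :=
  Relation.ReflTransGen FlipStep c c'

open Finset


lemma max_insert' {α} [LinearOrder α] [DecidableEq α] (a : α) (s : Finset α) :
    (insert a s).max = max ↑a s.max := by
  apply le_antisymm
  · apply Finset.max_le; intro x hx
    rcases Finset.mem_insert.1 hx with h | h
    · exact h ▸ le_max_left _ _
    · exact le_trans (Finset.le_max h) (le_max_right _ _)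
  · exact max_le (Finset.le_max (Finset.mem_insert_self a s))
      (Finset.max_mono (Finset.subset_insert a s))

lemma min_insert' {α} [LinearOrder α] [DecidableEq α] (a : α) (s : Finset α) :
    (insert a s).min = min ↑a s.min := by
  apply le_antisymm
  · exact le_min (Finset.min_le (Finset.mem_insert_self a s))
      (Finset.min_mono (Finset.subset_insert a s))
  · apply Finset.le_min; intro x hx
    rcases Finset.mem_insert.1 hx with h | h
    · exact h ▸ min_le_left _ _
    · exact le_trans (min_le_right _ _) (Finset.min_le h)

variable {n : ℕ}

/-- configuration determined by a particle set -/
def cfg (A : Finset (Fin n)) : Fin n → Fin 4 := fun j =>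
  if j ∈ A then (if A.max = (j : WithBot (Fin n)) then 3 else 1)
  else (if Aᶜ.min = (j : WithTop (Fin n)) then 0 else 2)

/-- move a particle from p to q -/
def mv (A : Finset (Fin n)) (p q : Fin n) : Finset (Fin n) := insert q (A.erase p)

variable {A : Finset (Fin n)} {p q : Fin n}

lemma adj_ne (hadj : p.val + 1 = q.val ∨ q.val + 1 = p.val) : p ≠ q := by
  intro h; subst h; omega

lemma mem_mv {j : Fin n} : j ∈ mv A p q ↔ j = q ∨ (j ∈ A ∧ j ≠ p) := by
  simp [mv, Finset.mem_insert, Finset.mem_erase, and_comm]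

lemma card_mv (hp : p ∈ A) (hq : q ∉ A) : (mv A p q).card = A.card := by
  have h1 : q ∉ A.erase p := fun h => hq (Finset.mem_of_mem_erase h)
  have h2 : 1 ≤ A.card := Finset.card_pos.2 ⟨p, hp⟩
  rw [mv, Finset.card_insert_of_notMem h1, Finset.card_erase_of_mem hp]
  omega

lemma compl_mv (hpq : p ≠ q) : (mv A p q)ᶜ = mv Aᶜ q p := by
  rw [mv, mv, Finset.compl_insert, Finset.compl_erase,
    Finset.erase_insert_of_ne hpq]

lemma max_mv (hp : p ∈ A) (hq : q ∉ A) (hadj : p.val + 1 = q.val ∨ q.val + 1 = p.val) :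
    (mv A p q).max = if A.max = (p : WithBot (Fin n)) then (q : WithBot (Fin n)) else A.max := by
  rw [mv, max_insert']
  split
  case isTrue h =>
    have hle : (A.erase p).max ≤ (q : WithBot (Fin n)) := Finset.max_le (fun x hx => by
      obtain ⟨hxp, hxA⟩ := Finset.mem_erase.1 hx
      have h1 : (x : WithBot (Fin n)) ≤ ↑p := h ▸ Finset.le_max hxA
      have h2 : x ≤ p := WithBot.coe_le_coe.1 h1
      have h3 : x.val < p.val := lt_of_le_of_ne (Fin.le_def.1 h2) (fun hh => hxp (Fin.ext hh))
      exact WithBot.coe_le_coe.2 (Fin.le_def.2 (by rcases hadj with h4 | h4 <;> omega)))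
    exact max_eq_left hle
  case isFalse h =>
    have hne : A.Nonempty := ⟨p, hp⟩
    set m := A.max' hne with hm
    have hmax : A.max = ↑m := (Finset.coe_max' hne).symm
    have hmp : m ≠ p := fun hh => h (by rw [hmax, hh])
    have hpm : p < m := lt_of_le_of_ne (Finset.le_max' A p hp) (Ne.symm hmp)
    have h1 : (A.erase p).max = ↑m := le_antisymm
      ((Finset.max_mono (Finset.erase_subset p A)).trans_eq hmax)
      (Finset.le_max (Finset.mem_erase.2 ⟨hmp, A.max'_mem hne⟩))
    rw [h1, hmax]
    have hpm' : p.val < m.val := Fin.lt_def.1 hpm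
    have hqm : q ≤ m := Fin.le_def.2 (by rcases hadj with h4 | h4 <;> omega)
    exact max_eq_right (WithBot.coe_le_coe.2 hqm)

lemma min_mv {S : Finset (Fin n)} (hq : q ∈ S) (hp : p ∉ S)
    (hadj : p.val + 1 = q.val ∨ q.val + 1 = p.val) :
    (mv S q p).min = if S.min = (q : WithTop (Fin n)) then (p : WithTop (Fin n)) else S.min := by
  rw [mv, min_insert']
  split
  case isTrue h =>
    have hle : (p : WithTop (Fin n)) ≤ (S.erase q).min := Finset.le_min (fun x hx => by
      obtain ⟨hxq, hxS⟩ := Finset.mem_erase.1 hx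
      have h1 : (q : WithTop (Fin n)) ≤ ↑x := h ▸ Finset.min_le hxS
      have h2 : q ≤ x := WithTop.coe_le_coe.1 h1
      have h3 : q.val < x.val := lt_of_le_of_ne (Fin.le_def.1 h2) (fun hh => hxq (Fin.ext hh.symm))
      exact WithTop.coe_le_coe.2 (Fin.le_def.2 (by rcases hadj with h4 | h4 <;> omega)))
    exact min_eq_left hle
  case isFalse h =>
    have hne : S.Nonempty := ⟨q, hq⟩
    set m := S.min' hne with hm
    have hmin : S.min = ↑m := (Finset.coe_min' hne).symm
    have hmq : m ≠ q := fun hh => h (by rw [hmin, hh])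
    have hqm : m < q := lt_of_le_of_ne (Finset.min'_le S q hq) hmq
    have h1 : (S.erase q).min = ↑m := le_antisymm
      (Finset.min_le (Finset.mem_erase.2 ⟨hmq, S.min'_mem hne⟩))
      (hmin ▸ Finset.min_mono (Finset.erase_subset q S))
    rw [h1, hmin]
    have hqm' : m.val < q.val := Fin.lt_def.1 hqm
    have hmp : m ≤ p := Fin.le_def.2 (by rcases hadj with h4 | h4 <;> omega)
    exact min_eq_right (WithTop.coe_le_coe.2 hmp)

lemma not_mem_mv_self (hpq : p ≠ q) : p ∉ mv A p q := by
  simp [mem_mv, hpq]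

lemma cfg_mv_snd (hp : p ∈ A) (hq : q ∉ A)
    (hadj : p.val + 1 = q.val ∨ q.val + 1 = p.val) :
    cfg (mv A p q) q = cfg A p := by
  have hqmem : q ∈ mv A p q := mem_mv.2 (Or.inl rfl)
  have hmax := max_mv hp hq hadj
  by_cases h : A.max = (p : WithBot (Fin n))
  · rw [if_pos h] at hmax
    unfold cfg; rw [if_pos hqmem, if_pos hp, if_pos hmax, if_pos h]
  · rw [if_neg h] at hmax
    have h2 : (mv A p q).max ≠ (q : WithBot (Fin n)) := by
      rw [hmax]; intro hh; exact hq (Finset.mem_of_max hh)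
    unfold cfg; rw [if_pos hqmem, if_pos hp, if_neg h2, if_neg h]

lemma cfg_mv_fst (hp : p ∈ A) (hq : q ∉ A)
    (hadj : p.val + 1 = q.val ∨ q.val + 1 = p.val) :
    cfg (mv A p q) p = cfg A q := by
  have hpq := adj_ne hadj
  have hpmem : p ∉ mv A p q := not_mem_mv_self hpq
  have hq' : q ∈ Aᶜ := Finset.mem_compl.2 hq
  have hp' : p ∉ Aᶜ := by simp [Finset.mem_compl, hp]
  have hmin := min_mv (S := Aᶜ) (p := p) (q := q) hq' hp' hadj
  rw [← compl_mv hpq] at hmin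
  by_cases h : Aᶜ.min = (q : WithTop (Fin n))
  · rw [if_pos h] at hmin
    unfold cfg; rw [if_neg hpmem, if_neg hq, if_pos hmin, if_pos h]
  · rw [if_neg h] at hmin
    have h2 : (mv A p q)ᶜ.min ≠ (p : WithTop (Fin n)) := by
      rw [hmin]; intro hh; exact hp' (Finset.mem_of_min hh)
    unfold cfg; rw [if_neg hpmem, if_neg hq, if_neg h2, if_neg h]

lemma cfg_mv_other (hp : p ∈ A) (hq : q ∉ A)
    (hadj : p.val + 1 = q.val ∨ q.val + 1 = p.val)
    {i : Fin n} (hi : i ≠ p) (hi' : i ≠ q) :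
    cfg (mv A p q) i = cfg A i := by
  have hpq := adj_ne hadj
  by_cases him : i ∈ A
  · have himv : i ∈ mv A p q := mem_mv.2 (Or.inr ⟨him, hi⟩)
    have hmax := max_mv hp hq hadj
    unfold cfg; rw [if_pos himv, if_pos him]
    by_cases h : A.max = (p : WithBot (Fin n))
    · rw [if_pos h] at hmax
      rw [if_neg (by rw [hmax]; exact fun hh => hi' (WithBot.coe_eq_coe.1 hh).symm),
        if_neg (by rw [h]; exact fun hh => hi (WithBot.coe_eq_coe.1 hh).symm)]
    · rw [if_neg h] at hmax; rw [hmax]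
  · have himv : i ∉ mv A p q := by
      rw [mem_mv]; push_neg; exact ⟨hi', fun h => absurd h him⟩
    have hq' : q ∈ Aᶜ := Finset.mem_compl.2 hq
    have hp' : p ∉ Aᶜ := by simp [Finset.mem_compl, hp]
    have hmin := min_mv (S := Aᶜ) (p := p) (q := q) hq' hp' hadj
    rw [← compl_mv hpq] at hmin
    unfold cfg; rw [if_neg himv, if_neg him]
    by_cases h : Aᶜ.min = (q : WithTop (Fin n))
    · rw [if_pos h] at hmin
      rw [if_neg (by rw [hmin]; exact fun hh => hi (WithTop.coe_eq_coe.1 hh).symm),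
        if_neg (by rw [h]; exact fun hh => hi' (WithTop.coe_eq_coe.1 hh).symm)]
    · rw [if_neg h] at hmin; rw [hmin]

lemma cfg_vals (A : Finset (Fin n)) (j : Fin n) :
    cfg A j = 0 ∨ cfg A j = 1 ∨ cfg A j = 2 ∨ cfg A j = 3 := by
  unfold cfg; split_ifs <;> simp

lemma flipStep_mv (hp : p ∈ A) (hq : q ∉ A)
    (hadj : p.val + 1 = q.val ∨ q.val + 1 = p.val)
    (hok : ¬(A.max = (p : WithBot (Fin n)) ∧ Aᶜ.min = (q : WithTop (Fin n)))) :
    FlipStep (cfg A) (cfg (mv A p q)) := by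
  have hdiff : ((cfg A q).val = (cfg A p).val + 1 ∨ (cfg A p).val = (cfg A q).val + 1) := by
    unfold cfg
    rw [if_pos hp, if_neg hq]
    by_cases h1 : A.max = (p : WithBot (Fin n)) <;>
      by_cases h2 : Aᶜ.min = (q : WithTop (Fin n))
    · exact absurd ⟨h1, h2⟩ hok
    · rw [if_pos h1, if_neg h2]; decide
    · rw [if_neg h1, if_pos h2]; decide
    · rw [if_neg h1, if_neg h2]; decide
  have hadj' := hadj
  rcases hadj' with h | h
  · exact ⟨p, q, h, hdiff, cfg_mv_fst hp hq hadj, cfg_mv_snd hp hq hadj,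
      fun i hi hi' => cfg_mv_other hp hq hadj hi hi'⟩
  · refine ⟨q, p, h, ?_, cfg_mv_snd hp hq hadj, cfg_mv_fst hp hq hadj,
      fun i hi hi' => cfg_mv_other hp hq hadj hi' hi⟩
    tauto

lemma flipStep_symm {N k : ℕ} {c c' : Fin N → Fin k} (h : FlipStep c c') : FlipStep c' c := by
  obtain ⟨j, j', hjj, hval, h1, h2, hframe⟩ := h
  refine ⟨j, j', hjj, ?_, h2.symm, h1.symm, fun i hi hi' => (hframe i hi hi').symm⟩
  rw [h1, h2]; tauto

lemma sameSector_symm {N k : ℕ} {c c' : Fin N → Fin k} (h : SameSector c c') :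
    SameSector c' c :=
  (@Relation.ReflTransGen.symmetric _ _ ⟨fun _ _ => flipStep_symm⟩).symm _ _ h

lemma flip_from_cfg {c' : Fin n → Fin 4} (h : FlipStep (cfg A) c') :
    ∃ p q : Fin n, p ∈ A ∧ q ∉ A ∧ (p.val + 1 = q.val ∨ q.val + 1 = p.val) ∧
      ¬(A.max = (p : WithBot (Fin n)) ∧ Aᶜ.min = (q : WithTop (Fin n))) ∧
      c' = cfg (mv A p q) := by
  obtain ⟨j, j', hjj, hval, h1, h2, hframe⟩ := h
  have hne : j ≠ j' := by intro hh; rw [hh] at hjj; omega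
  by_cases hj : j ∈ A <;> by_cases hj' : j' ∈ A
  · exfalso
    unfold cfg at hval
    rw [if_pos hj, if_pos hj'] at hval
    split_ifs at hval <;> revert hval <;> decide
  · refine ⟨j, j', hj, hj', Or.inl hjj, ?_, ?_⟩
    · rintro ⟨ha, hb⟩
      unfold cfg at hval
      rw [if_pos hj, if_pos ha, if_neg hj', if_pos hb] at hval
      revert hval; decide
    have hadj : j.val + 1 = j'.val ∨ j'.val + 1 = j.val := Or.inl hjj
    funext i
    by_cases hij : i = j
    · subst hij; rw [h1, cfg_mv_fst hj hj' hadj]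
    · by_cases hij' : i = j'
      · subst hij'; rw [h2, cfg_mv_snd hj hj' hadj]
      · rw [hframe i hij hij', cfg_mv_other hj hj' hadj hij hij']
  · refine ⟨j', j, hj', hj, Or.inr hjj, ?_, ?_⟩
    · rintro ⟨ha, hb⟩
      unfold cfg at hval
      rw [if_neg hj, if_pos hb, if_pos hj', if_pos ha] at hval
      revert hval; decide
    have hadj : j'.val + 1 = j.val ∨ j.val + 1 = j'.val := Or.inr hjj
    funext i
    by_cases hij : i = j
    · subst hij; rw [h1, cfg_mv_snd hj' hj hadj]
    · by_cases hij' : i = j'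
      · subst hij'; rw [h2, cfg_mv_fst hj' hj hadj]
      · rw [hframe i hij hij', cfg_mv_other hj' hj hadj hij' hij]
  · exfalso
    unfold cfg at hval
    rw [if_neg hj, if_neg hj'] at hval
    split_ifs at hval <;> revert hval <;> decide

lemma mem_iff_cfg {j : Fin n} : j ∈ A ↔ (cfg A j = 1 ∨ cfg A j = 3) := by
  unfold cfg
  by_cases hj : j ∈ A
  · rw [if_pos hj]
    refine iff_of_true hj ?_
    split_ifs
    · exact Or.inr rfl
    · exact Or.inl rfl
  · rw [if_neg hj]
    refine iff_of_false hj ?_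
    split_ifs <;> decide

lemma cfg_injective {A B : Finset (Fin n)} (h : cfg A = cfg B) : A = B := by
  ext j
  rw [mem_iff_cfg, h, ← mem_iff_cfg]

lemma max_eq_of {S : Finset (Fin n)} {a : Fin n} (ha : a ∈ S) (h : ∀ x ∈ S, x ≤ a) :
    S.max = (a : WithBot (Fin n)) :=
  le_antisymm (Finset.max_le fun x hx => WithBot.coe_le_coe.2 (h x hx)) (Finset.le_max ha)

lemma min_eq_of {S : Finset (Fin n)} {a : Fin n} (ha : a ∈ S) (h : ∀ x ∈ S, a ≤ x) :
    S.min = (a : WithTop (Fin n)) :=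
  le_antisymm (Finset.min_le ha) (Finset.le_min fun x hx => WithTop.coe_le_coe.2 (h x hx))

section Specific
variable {M : ℕ}

def AEx (hM : 1 ≤ M) : Finset (Fin (2*M)) := Finset.Iio ⟨M, by omega⟩
def Atop (hM : 1 ≤ M) : Finset (Fin (2*M)) := Finset.Ici ⟨M, by omega⟩
def Alast (hM : 1 ≤ M) : Fin (2*M) := ⟨2*M-1, by omega⟩
def A0 (hM : 1 ≤ M) : Finset (Fin (2*M)) :=
  insert (Alast hM) (Finset.Ico ⟨1, by omega⟩ ⟨M, by omega⟩)

lemma mem_AEx {hM : 1 ≤ M} {j : Fin (2*M)} : j ∈ AEx hM ↔ j.val < M := by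
  simp [AEx, Finset.mem_Iio, Fin.lt_def]

lemma mem_Atop {hM : 1 ≤ M} {j : Fin (2*M)} : j ∈ Atop hM ↔ M ≤ j.val := by
  simp [Atop, Finset.mem_Ici, Fin.le_def]

lemma mem_A0 {hM : 1 ≤ M} {j : Fin (2*M)} :
    j ∈ A0 hM ↔ (j.val = 2*M-1 ∨ (1 ≤ j.val ∧ j.val < M)) := by
  simp [A0, Finset.mem_insert, Finset.mem_Ico, Fin.le_def, Fin.lt_def, Alast, Fin.ext_iff]

lemma card_AEx (hM : 1 ≤ M) : (AEx hM).card = M := by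
  rw [AEx, Fin.card_Iio]

lemma card_Atop (hM : 1 ≤ M) : (Atop hM).card = M := by
  rw [Atop, Fin.card_Ici]
  show 2*M - M = M
  omega

lemma card_A0 (hM : 1 ≤ M) : (A0 hM).card = M := by
  rw [A0, Finset.card_insert_of_notMem (by
    simp [Finset.mem_Ico, Fin.le_def, Fin.lt_def, Alast]; omega), Fin.card_Ico]
  show M - 1 + 1 = M
  omega

lemma frozen (hM : 1 ≤ M) {c' : Fin (2*M) → Fin 4}
    (h : FlipStep (cfg (AEx hM)) c') : False := by
  obtain ⟨p, q, hp, hq, hadj, hok, -⟩ := flip_from_cfg h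
  rw [mem_AEx] at hp
  rw [mem_AEx] at hq
  push_neg at hq
  have hpv : p.val = M - 1 := by rcases hadj with h | h <;> omega
  have hqv : q.val = M := by rcases hadj with h | h <;> omega
  apply hok
  constructor
  · exact max_eq_of (mem_AEx.2 hp) fun x hx => Fin.le_def.2 (by
      have := mem_AEx.1 hx; omega)
  · exact min_eq_of (Finset.mem_compl.2 (by rw [mem_AEx]; omega))
      fun x hx => Fin.le_def.2 (by
        have := Finset.mem_compl.1 hx; rw [mem_AEx] at this; omega)

lemma sector_inv (hM : 1 ≤ M) {c c' : Fin (2*M) → Fin 4} (h : SameSector c c')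
    (hc : ∃ A, A.card = M ∧ A ≠ AEx hM ∧ c = cfg A) :
    ∃ A, A.card = M ∧ A ≠ AEx hM ∧ c' = cfg A := by
  induction h with
  | refl => exact hc
  | tail hab hbc ih =>
    obtain ⟨A, hcard, hne, rfl⟩ := ih
    obtain ⟨p, q, hp, hq, hadj, hok, rfl⟩ := flip_from_cfg hbc
    refine ⟨mv A p q, by rw [card_mv hp hq, hcard], ?_, rfl⟩
    intro hEx
    apply frozen hM (c' := cfg A)
    rw [← hEx]
    exact flipStep_symm hbc

lemma stage2 (hM : 1 ≤ M) : ∀ k (A : Finset (Fin (2*M))), A.card = M → Alast hM ∈ A →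
    (∑ x ∈ A, (2*M - 1 - x.val)) = k → SameSector (cfg A) (cfg (Atop hM)) := by
  intro k
  induction k using Nat.strong_induction_on with
  | _ k ih =>
  intro A hcard hlast hsum
  by_cases hA : A = Atop hM
  · rw [hA]
    exact Relation.ReflTransGen.refl
  · have hAtop : ¬ (Atop hM ⊆ A) := fun hsub =>
      hA (Finset.eq_of_subset_of_card_le hsub (by rw [hcard, card_Atop hM])).symm
    obtain ⟨j, hjTop, hjA⟩ := Finset.not_subset.1 hAtop
    have hjv : M ≤ j.val := mem_Atop.1 hjTop
    have hjlt : j.val < 2*M := j.isLt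
    set T := A.filter (fun x => x.val < j.val) with hT
    have hTne : T.Nonempty := by
      rw [← Finset.card_pos]
      have h1 : A.filter (fun x => ¬ x.val < j.val) ⊆ (Finset.Ici j).erase j := by
        intro x hx
        simp only [Finset.mem_filter] at hx
        refine Finset.mem_erase.2 ⟨?_, Finset.mem_Ici.2 (Fin.le_def.2 (by omega))⟩
        rintro rfl; exact hjA hx.1
      have h2 : (A.filter (fun x => ¬ x.val < j.val)).card ≤ 2*M - j.val - 1 := by
        calc (A.filter (fun x => ¬ x.val < j.val)).card
            ≤ ((Finset.Ici j).erase j).card := Finset.card_le_card h1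
          _ = (Finset.Ici j).card - 1 := Finset.card_erase_of_mem (Finset.mem_Ici.2 le_rfl)
          _ = 2*M - j.val - 1 := by rw [Fin.card_Ici]
      have h3 := Finset.card_filter_add_card_filter_not
        (s := A) (p := fun x => x.val < j.val)
      rw [← hT] at h3
      omega
    set b := T.max' hTne with hb
    have hbT : b ∈ T := T.max'_mem hTne
    have hbA : b ∈ A := (Finset.mem_filter.1 hbT).1
    have hbj : b.val < j.val := (Finset.mem_filter.1 hbT).2
    have hb2 : b.val + 1 < 2*M := by omega
    set q : Fin (2*M) := ⟨b.val+1, hb2⟩ with hqdef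
    have hqv : q.val = b.val + 1 := rfl
    have hqA : q ∉ A := by
      intro hqmem
      by_cases hqj : q.val = j.val
      · exact hjA ((Fin.ext hqj : q = j) ▸ hqmem)
      · have hqT : q ∈ T := Finset.mem_filter.2 ⟨hqmem, by omega⟩
        have := T.le_max' q hqT
        rw [Fin.le_def] at this
        omega
    have hadj : b.val + 1 = q.val ∨ q.val + 1 = b.val := Or.inl rfl
    have hok : ¬(A.max = (b : WithBot (Fin (2*M))) ∧ Aᶜ.min = (q : WithTop (Fin (2*M)))) := by
      rintro ⟨hmax, -⟩
      have h1 : (Alast hM : WithBot (Fin (2*M))) ≤ ↑b := hmax ▸ Finset.le_max hlast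
      have h2 := Fin.le_def.1 (WithBot.coe_le_coe.1 h1)
      simp only [Alast] at h2
      omega
    have hstep : FlipStep (cfg A) (cfg (mv A b q)) := flipStep_mv hbA hqA hadj hok
    have hcard' : (mv A b q).card = M := by rw [card_mv hbA hqA, hcard]
    have hlast' : Alast hM ∈ mv A b q := mem_mv.2 (Or.inr ⟨hlast, by
      intro hh
      have : (Alast hM).val = b.val := by rw [hh]
      simp only [Alast] at this
      omega⟩)
    have hsum' : (∑ x ∈ mv A b q, (2*M-1-x.val)) < k := by
      have hqe : q ∉ A.erase b := fun h => hqA (Finset.mem_of_mem_erase h)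
      rw [mv, Finset.sum_insert hqe]
      have h4 : (∑ x ∈ A.erase b, (2*M-1-x.val)) + (2*M-1-b.val)
          = ∑ x ∈ A, (2*M-1-x.val) := Finset.sum_erase_add A _ hbA
      have hb3 : b.val < 2*M - 1 := by omega
      omega
    exact Relation.ReflTransGen.head hstep (ih _ hsum' (mv A b q) hcard' hlast' rfl)

lemma stage1 (hM : 1 ≤ M) : ∀ k (A : Finset (Fin (2*M))) (hAne : A.Nonempty),
    A.card = M → A ≠ AEx hM → 2*M - 1 - (A.max' hAne).val = k →
    SameSector (cfg A) (cfg (Atop hM)) := by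
  intro k
  induction k with
  | zero =>
    intro A hAne hcard hne hk
    have hmlt := (A.max' hAne).isLt
    have hmaxval : (A.max' hAne).val = 2*M - 1 := by omega
    have hlast : Alast hM ∈ A := by
      have h := A.max'_mem hAne
      rwa [show A.max' hAne = Alast hM from Fin.ext (by simp [Alast, hmaxval])] at h
    exact stage2 hM _ A hcard hlast rfl
  | succ k ih =>
    intro A hAne hcard hne hk
    set p := A.max' hAne with hp
    have hpA : p ∈ A := A.max'_mem hAne
    have hplt := p.isLt
    have hpval : p.val + 1 < 2*M := by omega
    set q : Fin (2*M) := ⟨p.val + 1, hpval⟩ with hq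
    have hqv : q.val = p.val + 1 := rfl
    have hqA : q ∉ A := fun h => by
      have := A.le_max' q h
      rw [Fin.le_def] at this
      omega
    have hmaxp : A.max = (p : WithBot (Fin (2*M))) := (Finset.coe_max' hAne).symm
    have hok : ¬(A.max = (p : WithBot (Fin (2*M))) ∧ Aᶜ.min = (q : WithTop (Fin (2*M)))) := by
      rintro ⟨-, hmin⟩
      apply hne
      have hsub1 : A ⊆ Finset.Iio q := fun x hx => Finset.mem_Iio.2 (Fin.lt_def.2 (by
        have := A.le_max' x hx
        rw [Fin.le_def] at this
        omega))
      have hsub2 : Finset.Iio q ⊆ A := by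
        intro x hx
        by_contra hxA
        have h1 : Aᶜ.min ≤ ↑x := Finset.min_le (Finset.mem_compl.2 hxA)
        rw [hmin] at h1
        have h2 := Fin.le_def.1 (WithTop.coe_le_coe.1 h1)
        have h3 := Fin.lt_def.1 (Finset.mem_Iio.1 hx)
        omega
      have hEq : A = Finset.Iio q := le_antisymm hsub1 hsub2
      have hqM : q.val = M := by
        have hcIio := Fin.card_Iio q
        rw [← hEq, hcard] at hcIio
        omega
      rw [hEq, AEx]
      congr 1
      exact Fin.ext hqM
    have hstep := flipStep_mv hpA hqA (Or.inl rfl) hok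
    have hA'c : (mv A p q).card = M := by rw [card_mv hpA hqA, hcard]
    have hA'ne : (mv A p q).Nonempty := ⟨q, mem_mv.2 (Or.inl rfl)⟩
    have hmax' : (mv A p q).max = (q : WithBot (Fin (2*M))) := by
      rw [max_mv hpA hqA (Or.inl rfl), if_pos hmaxp]
    have hmaxval' : ((mv A p q).max' hA'ne) = q := by
      have h := Finset.coe_max' hA'ne
      rw [hmax'] at h
      exact WithBot.coe_inj.1 h.symm |>.symm
    have hne' : mv A p q ≠ AEx hM := by
      intro hh
      have hmem : q ∈ AEx hM := hh ▸ mem_mv.2 (Or.inl rfl)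
      rw [mem_AEx] at hmem
      have hcardle : A.card ≤ p.val + 1 := by
        have hsub : A ⊆ Finset.Iic p := fun x hx => Finset.mem_Iic.2 (A.le_max' x hx)
        calc A.card ≤ (Finset.Iic p).card := Finset.card_le_card hsub
          _ = p.val + 1 := Fin.card_Iic p
      omega
    exact Relation.ReflTransGen.head hstep
      (ih (mv A p q) hA'ne hA'c hne' (by rw [hmaxval', hqv]; omega))

lemma connect (hM : 1 ≤ M) {A : Finset (Fin (2*M))} (hcard : A.card = M)
    (hne : A ≠ AEx hM) : SameSector (cfg A) (cfg (Atop hM)) :=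
  stage1 hM _ A (Finset.card_pos.1 (by omega)) hcard hne rfl

end Specific

section Final
variable {M : ℕ}

lemma max_A0 (hM : 1 ≤ M) : (A0 hM).max = (Alast hM : WithBot (Fin (2*M))) :=
  max_eq_of (mem_A0.2 (Or.inl rfl)) fun x _ => Fin.le_def.2 (by
    have := x.isLt; simp only [Alast]; omega)

lemma min_A0c (hM : 1 ≤ M) :
    (A0 hM)ᶜ.min = ((⟨0, by omega⟩ : Fin (2*M)) : WithTop (Fin (2*M))) :=
  min_eq_of (Finset.mem_compl.2 (by rw [mem_A0]; simp; omega))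
    fun x _ => Fin.le_def.2 (by simp)

lemma max_AEx (hM : 1 ≤ M) :
    (AEx hM).max = ((⟨M-1, by omega⟩ : Fin (2*M)) : WithBot (Fin (2*M))) :=
  max_eq_of (mem_AEx.2 (by simp; omega)) fun x hx => Fin.le_def.2 (by
    have := mem_AEx.1 hx; simp; omega)

lemma min_AExc (hM : 1 ≤ M) :
    (AEx hM)ᶜ.min = ((⟨M, by omega⟩ : Fin (2*M)) : WithTop (Fin (2*M))) :=
  min_eq_of (Finset.mem_compl.2 (by rw [mem_AEx]; simp))
    fun x hx => Fin.le_def.2 (by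
      have := Finset.mem_compl.1 hx; rw [mem_AEx] at this; simp; omega)

lemma cfg_A0_val (hM : 1 ≤ M) (j : Fin (2*M)) :
    cfg (A0 hM) j = if j.val = 0 then 0 else if j.val < M then 1
      else if j.val + 1 < 2*M then 2 else 3 := by
  have hjlt := j.isLt
  unfold cfg
  by_cases hj : j ∈ A0 hM
  · rw [if_pos hj, max_A0 hM]
    rcases mem_A0.1 hj with h | h
    · rw [if_pos (by rw [WithBot.coe_inj]; exact Fin.ext (by simp [Alast]; omega)),
        if_neg (by omega), if_neg (by omega), if_neg (by omega)]
    · rw [if_neg (by rw [WithBot.coe_inj, Fin.ext_iff]; simp [Alast]; omega),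
        if_neg (by omega), if_pos (by omega)]
  · rw [if_neg hj, min_A0c hM]
    have hA0 : ¬(j.val = 2*M-1 ∨ (1 ≤ j.val ∧ j.val < M)) := fun hh => hj (mem_A0.2 hh)
    push_neg at hA0
    obtain ⟨h1, h2⟩ := hA0
    by_cases h0 : j.val = 0
    · rw [if_pos (by rw [WithTop.coe_inj]; exact Fin.ext (by simp; omega)), if_pos h0]
    · have h3 : M ≤ j.val := h2 (by omega)
      rw [if_neg (by rw [WithTop.coe_inj, Fin.ext_iff]; simp; omega), if_neg h0,
        if_neg (by omega), if_pos (by omega)]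

lemma cfg_AEx_val (hM : 1 ≤ M) (j : Fin (2*M)) :
    cfg (AEx hM) j = if j.val + 1 < M then 1 else if j.val + 1 = M then 3
      else if j.val = M then 0 else 2 := by
  have hjlt := j.isLt
  unfold cfg
  by_cases hj : j ∈ AEx hM
  · have hjv := mem_AEx.1 hj
    rw [if_pos hj, max_AEx hM]
    by_cases h : j.val = M - 1
    · rw [if_pos (by rw [WithBot.coe_inj]; exact Fin.ext (by simp; omega)),
        if_neg (by omega), if_pos (by omega)]
    · rw [if_neg (by rw [WithBot.coe_inj, Fin.ext_iff]; simp; omega), if_pos (by omega)]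
  · have hjv : M ≤ j.val := by
      by_contra hc
      push_neg at hc
      exact hj (mem_AEx.2 hc)
    rw [if_neg hj, min_AExc hM]
    by_cases h : j.val = M
    · rw [if_pos (by rw [WithTop.coe_inj]; exact Fin.ext (by simp; omega)),
        if_neg (by omega), if_neg (by omega), if_pos h]
    · rw [if_neg (by rw [WithTop.coe_inj, Fin.ext_iff]; simp; omega),
        if_neg (by omega), if_neg (by omega), if_neg h]

lemma A0_ne_AEx (hM : 1 ≤ M) : A0 hM ≠ AEx hM := by
  intro h
  have h1 : Alast hM ∈ AEx hM := h ▸ mem_A0.2 (Or.inl rfl)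
  rw [mem_AEx] at h1
  simp only [Alast] at h1
  omega

end Final


/-- The width-4 sector with representative `|0 1 1 … 1 2 2 … 2 3⟩` (one 0, `M-1` ones,
`M-1` twos, one 3, on `N = 2M` sites) has exactly `C(2M, M) - 1` configurations: precisely
one configuration of the unconstrained width-2-like problem, namely
`|1 1 … 1 3 0 2 2 … 2⟩`, is excluded from the sector. -/
theorem width4_sector_card (M : ℕ) (hM : 1 ≤ M)
    (c₀ cEx : Fin (2 * M) → Fin 4)
    (hc₀ : ∀ j : Fin (2 * M), c₀ j =
      if j.val = 0 then 0 else if j.val < M then 1 else if j.val + 1 < 2 * M then 2 else 3)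
    (hcEx : ∀ j : Fin (2 * M), cEx j =
      if j.val + 1 < M then 1 else if j.val + 1 = M then 3 else if j.val = M then 0 else 2) :
    Nat.card {c' : Fin (2 * M) → Fin 4 // SameSector c₀ c'} = Nat.choose (2 * M) M - 1 ∧
    ¬ SameSector c₀ cEx := by
  have hc0 : c₀ = cfg (A0 hM) := by funext j; rw [hc₀ j, cfg_A0_val hM j]
  have hcEx2 : cEx = cfg (AEx hM) := by funext j; rw [hcEx j, cfg_AEx_val hM j]
  have hA0card := card_A0 hM
  have hA0ne := A0_ne_AEx hM
  have hchar : ∀ c' : Fin (2*M) → Fin 4,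
      SameSector c₀ c' ↔ ∃ A, A.card = M ∧ A ≠ AEx hM ∧ c' = cfg A := by
    intro c'
    constructor
    · intro h
      exact sector_inv hM h ⟨A0 hM, hA0card, hA0ne, hc0⟩
    · rintro ⟨A, hcard, hne, rfl⟩
      rw [hc0]
      exact (connect hM hA0card hA0ne).trans (sameSector_symm (connect hM hcard hne))
  constructor
  · have e : {A : Finset (Fin (2*M)) // A.card = M ∧ A ≠ AEx hM} ≃
        {c' // SameSector c₀ c'} := by
      refine Equiv.ofBijective
        (fun A => ⟨cfg A.1, (hchar _).2 ⟨A.1, A.2.1, A.2.2, rfl⟩⟩) ⟨?_, ?_⟩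
      · intro A B hAB
        simp only [Subtype.mk.injEq] at hAB
        exact Subtype.ext (cfg_injective hAB)
      · rintro ⟨c', hc'⟩
        obtain ⟨A, h1, h2, rfl⟩ := (hchar c').1 hc'
        exact ⟨⟨A, h1, h2⟩, rfl⟩
    rw [← Nat.card_congr e, Nat.card_eq_fintype_card, Fintype.card_subtype]
    have hfe : Finset.univ.filter (fun A : Finset (Fin (2*M)) => A.card = M ∧ A ≠ AEx hM)
        = (Finset.univ.powersetCard M).erase (AEx hM) := by
      ext B
      simp only [Finset.mem_filter, Finset.mem_univ, true_and, Finset.mem_erase,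
        Finset.mem_powersetCard_univ]
      tauto
    rw [hfe, Finset.card_erase_of_mem
        (by rw [Finset.mem_powersetCard_univ]; exact card_AEx hM),
      Finset.card_powersetCard, Finset.card_univ, Fintype.card_fin]
  · intro h
    obtain ⟨A, hcard, hne, hEq⟩ := (hchar cEx).1 h
    rw [hcEx2] at hEq
    exact hne (cfg_injective hEq.symm)
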